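/- Let φ : X̂ → ℝ be continuous, bi-scaling-invariant, G-invariant and g̃-admissible. Then for all real numbers x_1,…,x_m > 0, (φ−ψ̃)((1,x_1,…,x_m),(1,x_1,…,x_k)) ≥ (φ−ψ̃)((1,…,1,ν,…,ν),(1,…,1)), where in the first vector the value 1 occupies the first k+1 coordinates and ν = (x_{k+1}⋯x_m)^{1/(m−k)} / (x_1⋯x_k)^{1/(k+1)} the last m−k coordinates. -/

import Mathlib

open Complex MeasureTheory Finset

noncomputable section

/-- Squared norm of a complex vector. -/
def nsq {n : ℕ} (z : Fin n → ℂ) : ℝ := ∑ i, ‖z i‖ ^ 2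

/-- Laplacian at a point of a real-valued function of one complex variable. -/
def lap (f : ℂ → ℝ) (t : ℂ) : ℝ :=
  lineDeriv ℝ (fun s => lineDeriv ℝ f s 1) t 1 +
  lineDeriv ℝ (fun s => lineDeriv ℝ f s Complex.I) t Complex.I

/-- The point of `Fin (m+1)` corresponding to an index in `{0,...,k}`. -/
def embX (m k : ℕ) (hkm : k ≤ m) (i : Fin (k + 1)) : Fin (m + 1) :=
  ⟨(i : ℕ), by have := i.isLt; omega⟩

/-- Points of `(ℂ^{m+1}\{0}) × (ℂ^{k+1}\{0})` lifting the blow-up X. -/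
def inXhat (m k : ℕ) (hkm : k ≤ m)
    (p : (Fin (m + 1) → ℂ) × (Fin (k + 1) → ℂ)) : Prop :=
  p.1 ≠ 0 ∧ p.2 ≠ 0 ∧
    ∀ i j : Fin (k + 1),
      p.1 (embX m k hkm i) * p.2 j = p.1 (embX m k hkm j) * p.2 i

def psiX1 (m k : ℕ) (p : (Fin (m + 1) → ℂ) × (Fin (k + 1) → ℂ)) : ℝ :=
  Real.log
    ((∏ i ∈ Finset.univ.filter (fun i : Fin (m + 1) => (i : ℕ) ≤ k),
        ‖p.1 i‖) ^ (2 * ((m : ℝ) + 1 - (k : ℝ)) / ((k : ℝ) + 1)) *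
      (∏ j : Fin (k + 1), ‖p.2 j‖) ^ (2 * (k : ℝ) / ((k : ℝ) + 1)) /
      (nsq p.1 ^ ((m : ℝ) + 1 - (k : ℝ)) * nsq p.2 ^ (k : ℝ)))

def psiX2 (m k : ℕ) (p : (Fin (m + 1) → ℂ) × (Fin (k + 1) → ℂ)) : ℝ :=
  Real.log
    ((∏ i ∈ Finset.univ.filter (fun i : Fin (m + 1) => k + 1 ≤ (i : ℕ)),
        ‖p.1 i‖) ^ (2 * ((m : ℝ) + 1 - (k : ℝ)) / ((m : ℝ) - (k : ℝ))) *
      (∏ j : Fin (k + 1), ‖p.2 j‖) ^ (2 * (k : ℝ) / ((k : ℝ) + 1)) /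
      (nsq p.1 ^ ((m : ℝ) + 1 - (k : ℝ)) * nsq p.2 ^ (k : ℝ)))

def psiX (m k : ℕ) (p : (Fin (m + 1) → ℂ) × (Fin (k + 1) → ℂ)) : ℝ :=
  min (psiX1 m k p) (psiX2 m k p)

/-- Bi-scaling invariance. -/
def BiScalInv (m k : ℕ) (φ : ((Fin (m + 1) → ℂ) × (Fin (k + 1) → ℂ)) → ℝ) : Prop :=
  ∀ lam mu : ℂ, lam ≠ 0 → mu ≠ 0 →
    ∀ p : (Fin (m + 1) → ℂ) × (Fin (k + 1) → ℂ), φ (lam • p.1, mu • p.2) = φ p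

/-- Invariance under the group G acting on X. -/
def GInvX (m k : ℕ) (hkm : k ≤ m)
    (φ : ((Fin (m + 1) → ℂ) × (Fin (k + 1) → ℂ)) → ℝ) : Prop :=
  (∀ i j : Fin (k + 1), ∀ p : (Fin (m + 1) → ℂ) × (Fin (k + 1) → ℂ),
      φ (p.1 ∘ Equiv.swap (embX m k hkm i) (embX m k hkm j), p.2 ∘ Equiv.swap i j) = φ p) ∧
  (∀ i j : Fin (m + 1), k + 1 ≤ (i : ℕ) → k + 1 ≤ (j : ℕ) →
      ∀ p : (Fin (m + 1) → ℂ) × (Fin (k + 1) → ℂ),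
      φ (p.1 ∘ Equiv.swap i j, p.2) = φ p) ∧
  (∀ l : Fin (k + 1), ∀ θ : ℝ, ∀ p : (Fin (m + 1) → ℂ) × (Fin (k + 1) → ℂ),
      φ (Function.update p.1 (embX m k hkm l)
            (Complex.exp ((θ : ℂ) * Complex.I) * p.1 (embX m k hkm l)),
         Function.update p.2 l (Complex.exp ((θ : ℂ) * Complex.I) * p.2 l)) = φ p) ∧
  (∀ l : Fin (m + 1), k + 1 ≤ (l : ℕ) → ∀ θ : ℝ,
      ∀ p : (Fin (m + 1) → ℂ) × (Fin (k + 1) → ℂ),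
      φ (Function.update p.1 l (Complex.exp ((θ : ℂ) * Complex.I) * p.1 l), p.2) = φ p)

/-- A vector tangent to the orbit of the bi-scaling action at p. -/
def tangentX (m k : ℕ) (p v : (Fin (m + 1) → ℂ) × (Fin (k + 1) → ℂ)) : Prop :=
  ∃ a b : ℂ, v = (a • p.1, b • p.2)

/-- Local potential of g̃ plus φ along a curve. -/
def FX (m k : ℕ) (φ : ((Fin (m + 1) → ℂ) × (Fin (k + 1) → ℂ)) → ℝ)
    (c : ℂ → (Fin (m + 1) → ℂ) × (Fin (k + 1) → ℂ)) (t : ℂ) : ℝ :=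
  ((m : ℝ) + 1 - (k : ℝ)) * Real.log (nsq (c t).1) +
    (k : ℝ) * Real.log (nsq (c t).2) + φ (c t)

/-- g̃-admissibility. -/
def AdmX (m k : ℕ) (hkm : k ≤ m)
    (φ : ((Fin (m + 1) → ℂ) × (Fin (k + 1) → ℂ)) → ℝ) : Prop :=
  ∀ r : ℝ, 0 < r → ∀ c : ℂ → (Fin (m + 1) → ℂ) × (Fin (k + 1) → ℂ),
    DifferentiableOn ℂ c (Metric.ball 0 r) →
    (∀ t ∈ Metric.ball (0 : ℂ) r, inXhat m k hkm (c t)) →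
    ContDiffOn ℝ (⊤ : ℕ∞) (FX m k φ c) (Metric.ball 0 r) ∧
    (∀ t ∈ Metric.ball (0 : ℂ) r, 0 ≤ lap (FX m k φ c) t) ∧
    (∀ t ∈ Metric.ball (0 : ℂ) r, ¬ tangentX m k (c t) (deriv c t) →
      0 < lap (FX m k φ c) t)

namespace Aux

variable {m k : ℕ}

/-- second-block embedding -/
def s2 (hkm : k < m) (j : Fin (m - k)) : Fin (m + 1) := ⟨k + 1 + (j : ℕ), by have := j.isLt; omega⟩

abbrev s1 (hkm : k < m) (i : Fin (k + 1)) : Fin (m + 1) := embX m k hkm.le i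

/-- block equivalence -/
def eBlk (hkm : k < m) : Fin (k + 1) ⊕ Fin (m - k) ≃ Fin (m + 1) :=
  finSumFinEquiv.trans (finCongr (by omega))

variable {hkm : k < m}
variable (hkm)

@[simp] lemma s1_val (i : Fin (k + 1)) : ((s1 hkm i : Fin (m + 1)) : ℕ) = (i : ℕ) := rfl

@[simp] lemma s2_val (j : Fin (m - k)) : ((s2 hkm j : Fin (m + 1)) : ℕ) = k + 1 + (j : ℕ) := rfl

lemma s1_inj : Function.Injective (s1 (m := m) (k := k) hkm) := by
  intro i j h
  exact Fin.ext (by simpa using congrArg Fin.val h)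

lemma eBlk_inl (i : Fin (k + 1)) : eBlk hkm (Sum.inl i) = s1 hkm i := by
  apply Fin.ext
  simp [eBlk, embX]

lemma eBlk_inr (j : Fin (m - k)) : eBlk hkm (Sum.inr j) = s2 hkm j := by
  apply Fin.ext
  simp [eBlk, s2]

lemma prod_split {M : Type*} [CommMonoid M] (f : Fin (m + 1) → M) :
    ∏ i, f i = (∏ i, f (s1 hkm i)) * ∏ j, f (s2 hkm j) := by
  rw [← Equiv.prod_comp (eBlk hkm) f, Fintype.prod_sum_type]
  simp [eBlk_inl, eBlk_inr]

lemma sum_split (f : Fin (m + 1) → ℝ) :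
    ∑ i, f i = (∑ i, f (s1 hkm i)) + ∑ j, f (s2 hkm j) := by
  rw [← Equiv.sum_comp (eBlk hkm) f, Fintype.sum_sum_type]
  simp [eBlk_inl, eBlk_inr]

lemma prod_blk1 {M : Type*} [CommMonoid M] (f : Fin (m + 1) → M) :
    ∏ i ∈ Finset.univ.filter (fun i : Fin (m + 1) => (i : ℕ) ≤ k), f i
      = ∏ i, f (s1 hkm i) := by
  rw [Finset.prod_filter, prod_split hkm]
  have h1 : ∀ i : Fin (k + 1), (if ((s1 hkm i : Fin (m + 1)) : ℕ) ≤ k then f (s1 hkm i) else 1)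
      = f (s1 hkm i) := by
    intro i; rw [if_pos]; exact Nat.lt_succ_iff.mp i.isLt
  have h2 : ∀ j : Fin (m - k), (if ((s2 hkm j : Fin (m + 1)) : ℕ) ≤ k then f (s2 hkm j) else 1)
      = 1 := by
    intro j; rw [if_neg]
    have hv : ((s2 hkm j : Fin (m + 1)) : ℕ) = k + 1 + (j : ℕ) := rfl
    omega
  simp only [h1, h2, Finset.prod_const_one, mul_one]

lemma prod_blk2 {M : Type*} [CommMonoid M] (f : Fin (m + 1) → M) :
    ∏ i ∈ Finset.univ.filter (fun i : Fin (m + 1) => k + 1 ≤ (i : ℕ)), f i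
      = ∏ j, f (s2 hkm j) := by
  rw [Finset.prod_filter, prod_split hkm]
  have h1 : ∀ i : Fin (k + 1), (if k + 1 ≤ ((s1 hkm i : Fin (m + 1)) : ℕ) then f (s1 hkm i) else 1)
      = 1 := by
    intro i; rw [if_neg]
    have hv : ((s1 hkm i : Fin (m + 1)) : ℕ) = (i : ℕ) := rfl
    have := i.isLt; omega
  have h2 : ∀ j : Fin (m - k), (if k + 1 ≤ ((s2 hkm j : Fin (m + 1)) : ℕ) then f (s2 hkm j) else 1)
      = f (s2 hkm j) := by
    intro j; rw [if_pos]
    have hv : ((s2 hkm j : Fin (m + 1)) : ℕ) = k + 1 + (j : ℕ) := rfl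
    omega
  simp only [h1, h2, Finset.prod_const_one, one_mul]

lemma sum_blk1 (f : Fin (m + 1) → ℝ) :
    ∑ i ∈ Finset.univ.filter (fun i : Fin (m + 1) => (i : ℕ) ≤ k), f i
      = ∑ i, f (s1 hkm i) := prod_blk1 (M := Multiplicative ℝ) hkm f

lemma sum_blk2 (f : Fin (m + 1) → ℝ) :
    ∑ i ∈ Finset.univ.filter (fun i : Fin (m + 1) => k + 1 ≤ (i : ℕ)), f i
      = ∑ j, f (s2 hkm j) := prod_blk2 (M := Multiplicative ℝ) hkm f

end Aux

namespace Aux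

variable {m k : ℕ}

def EX (hkm : k < m) (a : Fin (m + 1) → ℝ) : (Fin (m + 1) → ℂ) × (Fin (k + 1) → ℂ) :=
  (fun i => Complex.exp ((a i : ℂ)), fun j => Complex.exp ((a (s1 hkm j) : ℂ)))

variable (hkm : k < m)

@[simp] lemma EX_fst (a : Fin (m + 1) → ℝ) (i : Fin (m + 1)) :
    (EX hkm a).1 i = Complex.exp ((a i : ℂ)) := rfl

@[simp] lemma EX_snd (a : Fin (m + 1) → ℝ) (j : Fin (k + 1)) :
    (EX hkm a).2 j = Complex.exp ((a (s1 hkm j) : ℂ)) := rfl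

def T1 (a : Fin (m + 1) → ℝ) : ℝ := ∑ i, a (s1 hkm i)
def T2 (a : Fin (m + 1) → ℝ) : ℝ := ∑ j, a (s2 hkm j)
def N1 (a : Fin (m + 1) → ℝ) : ℝ := ∑ i, Real.exp (a i) ^ 2
def N2 (a : Fin (m + 1) → ℝ) : ℝ := ∑ i, Real.exp (a (s1 hkm i)) ^ 2

lemma N1_pos (a : Fin (m + 1) → ℝ) : 0 < N1 a :=
  Finset.sum_pos (fun i _ => by positivity) ⟨0, Finset.mem_univ 0⟩

lemma N2_pos (a : Fin (m + 1) → ℝ) : 0 < N2 hkm a :=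
  Finset.sum_pos (fun i _ => by positivity) ⟨0, Finset.mem_univ 0⟩

lemma nsq_EX1 (a : Fin (m + 1) → ℝ) : nsq (EX hkm a).1 = N1 a := by
  simp [nsq, N1, Complex.norm_exp]

lemma nsq_EX2 (a : Fin (m + 1) → ℝ) : nsq (EX hkm a).2 = N2 hkm a := by
  simp [nsq, N2, Complex.norm_exp]

lemma psiX1_EX (a : Fin (m + 1) → ℝ) :
    psiX1 m k (EX hkm a) =
      (2 * ((m : ℝ) + 1 - (k : ℝ)) / ((k : ℝ) + 1) + 2 * (k : ℝ) / ((k : ℝ) + 1)) * T1 hkm a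
        - ((m : ℝ) + 1 - (k : ℝ)) * Real.log (N1 a) - (k : ℝ) * Real.log (N2 hkm a) := by
  have hP1 : (∏ i ∈ Finset.univ.filter (fun i : Fin (m + 1) => (i : ℕ) ≤ k),
      ‖(EX hkm a).1 i‖) = Real.exp (T1 hkm a) := by
    rw [prod_blk1 hkm, T1, Real.exp_sum]
    simp [Complex.norm_exp]
  have hP2 : (∏ j : Fin (k + 1), ‖(EX hkm a).2 j‖) = Real.exp (T1 hkm a) := by
    rw [T1, Real.exp_sum]
    simp [Complex.norm_exp]
  rw [psiX1, hP1, hP2, nsq_EX1, nsq_EX2, ← Real.exp_mul, ← Real.exp_mul, ← Real.exp_add,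
    Real.log_div (Real.exp_ne_zero _)
      (mul_pos (Real.rpow_pos_of_pos (N1_pos a) _) (Real.rpow_pos_of_pos (N2_pos hkm a) _)).ne',
    Real.log_exp, Real.log_mul (Real.rpow_pos_of_pos (N1_pos a) _).ne'
      (Real.rpow_pos_of_pos (N2_pos hkm a) _).ne',
    Real.log_rpow (N1_pos a), Real.log_rpow (N2_pos hkm a)]
  ring

lemma psiX2_EX (a : Fin (m + 1) → ℝ) :
    psiX2 m k (EX hkm a) =
      (2 * ((m : ℝ) + 1 - (k : ℝ)) / ((m : ℝ) - (k : ℝ))) * T2 hkm a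
        + (2 * (k : ℝ) / ((k : ℝ) + 1)) * T1 hkm a
        - ((m : ℝ) + 1 - (k : ℝ)) * Real.log (N1 a) - (k : ℝ) * Real.log (N2 hkm a) := by
  have hP1 : (∏ i ∈ Finset.univ.filter (fun i : Fin (m + 1) => k + 1 ≤ (i : ℕ)),
      ‖(EX hkm a).1 i‖) = Real.exp (T2 hkm a) := by
    rw [prod_blk2 hkm, T2, Real.exp_sum]
    simp [Complex.norm_exp]
  have hP2 : (∏ j : Fin (k + 1), ‖(EX hkm a).2 j‖) = Real.exp (T1 hkm a) := by
    rw [T1, Real.exp_sum]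
    simp [Complex.norm_exp]
  rw [psiX2, hP1, hP2, nsq_EX1, nsq_EX2, ← Real.exp_mul, ← Real.exp_mul, ← Real.exp_add,
    Real.log_div (Real.exp_ne_zero _)
      (mul_pos (Real.rpow_pos_of_pos (N1_pos a) _) (Real.rpow_pos_of_pos (N2_pos hkm a) _)).ne',
    Real.log_exp, Real.log_mul (Real.rpow_pos_of_pos (N1_pos a) _).ne'
      (Real.rpow_pos_of_pos (N2_pos hkm a) _).ne',
    Real.log_rpow (N1_pos a), Real.log_rpow (N2_pos hkm a)]
  ring

end Aux
namespace Aux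

variable {m k : ℕ}

/-- The local potential function. -/
def Fr (φ : ((Fin (m + 1) → ℂ) × (Fin (k + 1) → ℂ)) → ℝ) (hkm : k < m)
    (a : Fin (m + 1) → ℝ) : ℝ :=
  ((m : ℝ) + 1 - (k : ℝ)) * Real.log (N1 a) + (k : ℝ) * Real.log (N2 hkm a) + φ (EX hkm a)

def M1 (hkm : k < m) (a : Fin (m + 1) → ℝ) : ℝ :=
  -((2 * ((m : ℝ) + 1 - (k : ℝ)) / ((k : ℝ) + 1) + 2 * (k : ℝ) / ((k : ℝ) + 1)) * T1 hkm a)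

def M2 (hkm : k < m) (a : Fin (m + 1) → ℝ) : ℝ :=
  -((2 * ((m : ℝ) + 1 - (k : ℝ)) / ((m : ℝ) - (k : ℝ))) * T2 hkm a
      + (2 * (k : ℝ) / ((k : ℝ) + 1)) * T1 hkm a)

def Phi (φ : ((Fin (m + 1) → ℂ) × (Fin (k + 1) → ℂ)) → ℝ) (hkm : k < m)
    (a : Fin (m + 1) → ℝ) : ℝ :=
  φ (EX hkm a) - psiX m k (EX hkm a)

variable (hkm : k < m)

lemma Phi_eq (φ : ((Fin (m + 1) → ℂ) × (Fin (k + 1) → ℂ)) → ℝ) (a : Fin (m + 1) → ℝ) :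
    Phi φ hkm a = Fr φ hkm a + max (M1 hkm a) (M2 hkm a) := by
  have key : ∀ x y L c : ℝ, c - min (x - L) (y - L) = (L + c) + max (-x) (-y) := by
    intro x y L c
    rcases le_total x y with h | h
    · rw [min_eq_left (by linarith), max_eq_left (by linarith)]; ring
    · rw [min_eq_right (by linarith), max_eq_right (by linarith)]; ring
  rw [Phi, psiX, psiX1_EX hkm, psiX2_EX hkm]
  have h1 : (2 * ((m : ℝ) + 1 - (k : ℝ)) / ((k : ℝ) + 1) + 2 * (k : ℝ) / ((k : ℝ) + 1)) * T1 hkm a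
      - ((m : ℝ) + 1 - (k : ℝ)) * Real.log (N1 a) - (k : ℝ) * Real.log (N2 hkm a)
      = (2 * ((m : ℝ) + 1 - (k : ℝ)) / ((k : ℝ) + 1) + 2 * (k : ℝ) / ((k : ℝ) + 1)) * T1 hkm a
        - (((m : ℝ) + 1 - (k : ℝ)) * Real.log (N1 a) + (k : ℝ) * Real.log (N2 hkm a)) := by ring
  have h2 : (2 * ((m : ℝ) + 1 - (k : ℝ)) / ((m : ℝ) - (k : ℝ))) * T2 hkm a
      + (2 * (k : ℝ) / ((k : ℝ) + 1)) * T1 hkm a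
      - ((m : ℝ) + 1 - (k : ℝ)) * Real.log (N1 a) - (k : ℝ) * Real.log (N2 hkm a)
      = ((2 * ((m : ℝ) + 1 - (k : ℝ)) / ((m : ℝ) - (k : ℝ))) * T2 hkm a
        + (2 * (k : ℝ) / ((k : ℝ) + 1)) * T1 hkm a)
        - (((m : ℝ) + 1 - (k : ℝ)) * Real.log (N1 a) + (k : ℝ) * Real.log (N2 hkm a)) := by ring
  rw [h1, h2, key]
  rw [Fr, M1, M2]

lemma convexOn_of_affine {f : (Fin (m + 1) → ℝ) → ℝ}
    (hf : ∀ x y : Fin (m + 1) → ℝ, ∀ μ ν : ℝ, f (μ • x + ν • y) = μ * f x + ν * f y) :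
    ConvexOn ℝ Set.univ f :=
  ⟨convex_univ, fun x _ y _ μ ν _ _ _ => by
    rw [smul_eq_mul, smul_eq_mul, hf x y μ ν]⟩

lemma T1_affine (x y : Fin (m + 1) → ℝ) (μ ν : ℝ) :
    T1 hkm (μ • x + ν • y) = μ * T1 hkm x + ν * T1 hkm y := by
  simp [T1, Finset.mul_sum, Finset.sum_add_distrib]

lemma T2_affine (x y : Fin (m + 1) → ℝ) (μ ν : ℝ) :
    T2 hkm (μ • x + ν • y) = μ * T2 hkm x + ν * T2 hkm y := by
  simp [T2, Finset.mul_sum, Finset.sum_add_distrib]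

lemma convexOn_M1 : ConvexOn ℝ Set.univ (M1 (m := m) (k := k) hkm) :=
  convexOn_of_affine (fun x y μ ν => by rw [M1, M1, M1, T1_affine hkm]; ring)

lemma convexOn_M2 : ConvexOn ℝ Set.univ (M2 (m := m) (k := k) hkm) :=
  convexOn_of_affine (fun x y μ ν => by rw [M2, M2, M2, T1_affine hkm, T2_affine hkm]; ring)

lemma convexOn_of_lines {f : (Fin (m + 1) → ℝ) → ℝ}
    (h : ∀ a d : Fin (m + 1) → ℝ, ConvexOn ℝ Set.univ fun s : ℝ => f (a + s • d)) :
    ConvexOn ℝ Set.univ f := by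
  refine ⟨convex_univ, fun x _ y _ μ ν hμ hν hs => ?_⟩
  have h2 := (h x (y - x)).2 (Set.mem_univ (0 : ℝ)) (Set.mem_univ (1 : ℝ)) hμ hν hs
  rw [show μ • (0:ℝ) + ν • (1:ℝ) = ν from by simp] at h2
  simp only [zero_smul, add_zero, one_smul, add_sub_cancel, smul_eq_mul] at h2
  have e : x + ν • (y - x) = μ • x + ν • y := by
    have hμ' : μ = 1 - ν := by linarith
    subst hμ'
    simp only [smul_sub, sub_smul, one_smul]
    abel
  rw [e] at h2
  simpa using h2

end Aux
namespace Aux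

variable {m k : ℕ}

lemma phase_inv (hkm : k < m) {φ : ((Fin (m + 1) → ℂ) × (Fin (k + 1) → ℂ)) → ℝ}
    (hG : GInvX m k hkm.le φ) (θ : Fin (m + 1) → ℝ)
    (p : (Fin (m + 1) → ℂ) × (Fin (k + 1) → ℂ)) :
    φ (fun i => Complex.exp ((θ i : ℂ) * Complex.I) * p.1 i,
       fun j => Complex.exp ((θ (s1 hkm j) : ℂ) * Complex.I) * p.2 j) = φ p := by
  classical
  have main : ∀ S : Finset (Fin (m + 1)), ∀ p : (Fin (m + 1) → ℂ) × (Fin (k + 1) → ℂ),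
      φ (fun i => if i ∈ S then Complex.exp ((θ i : ℂ) * Complex.I) * p.1 i else p.1 i,
         fun j => if s1 hkm j ∈ S then Complex.exp ((θ (s1 hkm j) : ℂ) * Complex.I) * p.2 j
           else p.2 j) = φ p := by
    intro S
    induction S using Finset.induction_on with
    | empty => intro p; simp
    | @insert l S hl ih =>
      intro p
      set q : (Fin (m + 1) → ℂ) × (Fin (k + 1) → ℂ) :=
        (fun i => if i ∈ S then Complex.exp ((θ i : ℂ) * Complex.I) * p.1 i else p.1 i,
         fun j => if s1 hkm j ∈ S then Complex.exp ((θ (s1 hkm j) : ℂ) * Complex.I) * p.2 j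
           else p.2 j) with hq
      have e1 : (fun i => if i ∈ insert l S then Complex.exp ((θ i : ℂ) * Complex.I) * p.1 i
          else p.1 i) = Function.update q.1 l (Complex.exp ((θ l : ℂ) * Complex.I) * q.1 l) := by
        funext i
        simp only [hq, Function.update_apply, Finset.mem_insert]
        by_cases hi : i = l
        · subst hi; simp [hl]
        · simp [hi]
      by_cases hlk : (l : ℕ) ≤ k
      · -- first block
        set l' : Fin (k + 1) := ⟨(l : ℕ), by omega⟩ with hl'
        have hemb : embX m k hkm.le l' = l := Fin.ext rfl
        have hGl := hG.2.2.1 l' (θ l) q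
        rw [hemb] at hGl
        have hinj : ∀ j : Fin (k + 1), s1 hkm j = l ↔ j = l' := by
          intro j
          constructor
          · intro hcon
            apply Fin.ext
            have := congrArg Fin.val hcon
            simpa using this
          · intro hcon
            rw [hcon]
            exact Fin.ext rfl
        have e2 : (fun j => if s1 hkm j ∈ insert l S
              then Complex.exp ((θ (s1 hkm j) : ℂ) * Complex.I) * p.2 j else p.2 j)
            = Function.update q.2 l' (Complex.exp ((θ l : ℂ) * Complex.I) * q.2 l') := by
          funext j
          simp only [hq, Function.update_apply, Finset.mem_insert]
          by_cases hj : j = l'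
          · have hsj : s1 hkm j = l := (hinj j).mpr hj
            have hsl' : s1 hkm l' = l := (hinj l').mpr rfl
            simp [hsj, hsl', hj, hl]
          · have hsj : s1 hkm j ≠ l := fun hcon => hj ((hinj j).mp hcon)
            simp [hsj, hj]
        rw [e1, e2]
        exact hGl.trans (ih p)
      · -- second block
        have hGl := hG.2.2.2 l (by omega) (θ l) q
        have e2 : (fun j => if s1 hkm j ∈ insert l S
              then Complex.exp ((θ (s1 hkm j) : ℂ) * Complex.I) * p.2 j else p.2 j) = q.2 := by
          funext j
          have hsj : s1 hkm j ≠ l := by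
            intro hcon
            apply hlk
            have := congrArg Fin.val hcon
            simp at this
            omega
          simp only [hq, Finset.mem_insert]
          simp [hsj]
        rw [e1, e2]
        exact hGl.trans (ih p)
  have := main Finset.univ p
  simpa using this

end Aux
namespace Aux

variable {m k : ℕ}

def curveX (hkm : k < m) (a d : Fin (m + 1) → ℝ) (t : ℂ) :
    (Fin (m + 1) → ℂ) × (Fin (k + 1) → ℂ) :=
  (fun i => Complex.exp ((a i : ℂ) + t * (d i : ℂ)),
   fun j => Complex.exp ((a (s1 hkm j) : ℂ) + t * (d (s1 hkm j) : ℂ)))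

variable (hkm : k < m)

lemma curveX_real (a d : Fin (m + 1) → ℝ) (s : ℝ) :
    curveX hkm a d (s : ℂ) = EX hkm (a + s • d) := by
  unfold curveX EX
  refine Prod.ext (funext fun i => ?_) (funext fun j => ?_) <;>
  · show Complex.exp _ = Complex.exp _
    congr 1
    simp only [Pi.add_apply, Pi.smul_apply, smul_eq_mul]
    push_cast
    ring

lemma curveX_inXhat (a d : Fin (m + 1) → ℝ) (h : k ≤ m) (t : ℂ) :
    inXhat m k h (curveX hkm a d t) := by
  refine ⟨?_, ?_, ?_⟩
  · intro hcon
    have h0 := congrFun hcon 0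
    rw [Pi.zero_apply] at h0
    exact Complex.exp_ne_zero _ h0
  · intro hcon
    have h0 := congrFun hcon 0
    rw [Pi.zero_apply] at h0
    exact Complex.exp_ne_zero _ h0
  · intro i j
    exact mul_comm ((curveX hkm a d t).1 (embX m k h i)) ((curveX hkm a d t).2 j)

lemma curveX_diff (a d : Fin (m + 1) → ℝ) : Differentiable ℂ (curveX hkm a d) := by
  apply Differentiable.prodMk
  · rw [differentiable_pi]
    intro i
    exact (differentiable_const _).add (differentiable_id.mul (differentiable_const _)) |>.cexp
  · rw [differentiable_pi]
    intro j
    exact (differentiable_const _).add (differentiable_id.mul (differentiable_const _)) |>.cexp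

lemma nsq_phase {n : ℕ} (θ : Fin n → ℝ) (z : Fin n → ℂ) :
    nsq (fun i => Complex.exp ((θ i : ℂ) * Complex.I) * z i) = nsq z := by
  unfold nsq
  congr 1
  funext i
  rw [norm_mul]
  simp [Complex.norm_exp]

lemma curveX_phase (a d : Fin (m + 1) → ℝ) (t : ℂ) :
    curveX hkm a d t =
      (fun i => Complex.exp (((fun i => d i * t.im) i : ℂ) * Complex.I)
         * (curveX hkm a d (t.re : ℂ)).1 i,
       fun j => Complex.exp (((fun i => d i * t.im) (s1 hkm j) : ℂ) * Complex.I)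
         * (curveX hkm a d (t.re : ℂ)).2 j) := by
  unfold curveX
  refine Prod.ext ?_ ?_ <;>
  · funext i
    simp only
    rw [← Complex.exp_add]
    congr 1
    rw [← Complex.re_add_im t]
    push_cast
    ring_nf
    simp [Complex.I_sq]
    ring

lemma FX_curve_re {φ : ((Fin (m + 1) → ℂ) × (Fin (k + 1) → ℂ)) → ℝ}
    (hG : GInvX m k hkm.le φ) (a d : Fin (m + 1) → ℝ) (t : ℂ) :
    FX m k φ (curveX hkm a d) t = FX m k φ (curveX hkm a d) (t.re : ℂ) := by
  unfold FX
  rw [curveX_phase hkm a d t]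
  simp only
  rw [nsq_phase, nsq_phase (fun j => (fun i => d i * t.im) (s1 hkm j))]
  congr 1
  exact phase_inv hkm hG (fun i => d i * t.im) (curveX hkm a d (t.re : ℂ))

end Aux
namespace Aux

variable {m k : ℕ} (hkm : k < m)

lemma Fr_line_convex {φ : ((Fin (m + 1) → ℂ) × (Fin (k + 1) → ℂ)) → ℝ}
    (hG : GInvX m k hkm.le φ) (hadm : AdmX m k hkm.le φ) (a d : Fin (m + 1) → ℝ) :
    ConvexOn ℝ Set.univ fun s : ℝ => Fr φ hkm (a + s • d) := by
  set c := curveX hkm a d with hc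
  set F := FX m k φ c with hF
  have hcd : Differentiable ℂ c := curveX_diff hkm a d
  have hXt : ∀ t ∈ Set.univ, inXhat m k hkm.le (c t) :=
    fun t _ => curveX_inXhat hkm a d hkm.le t
  have hsm : ContDiff ℝ (⊤ : ℕ∞) F := by
    rw [← contDiffOn_univ]
    apply contDiffOn_of_locally_contDiffOn
    intro x _
    refine ⟨Metric.ball 0 (‖x‖ + 1), Metric.isOpen_ball, ?_, ?_⟩
    · simp only [Metric.mem_ball, dist_zero_right]
      linarith [norm_nonneg x]
    · rw [Set.univ_inter]
      exact (hadm (‖x‖ + 1) (by positivity) c hcd.differentiableOn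
        (fun t _ => curveX_inXhat hkm a d hkm.le t)).1
  set g := fun s : ℝ => F (s : ℂ) with hg
  have hgF : ∀ t : ℂ, F t = g t.re := fun t => FX_curve_re hkm hG a d t
  have hgsm : ContDiff ℝ ((⊤ : ℕ∞) : WithTop ℕ∞) g :=
    (hsm.of_le (by simp)).comp Complex.ofRealCLM.contDiff
  obtain ⟨hgd, hgsm'⟩ := contDiff_infty_iff_deriv.mp hgsm
  obtain ⟨hgd2, _⟩ := contDiff_infty_iff_deriv.mp hgsm'
  have hlap : ∀ t : ℂ, 0 ≤ lap F t := by
    intro t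
    obtain ⟨_, h0, _⟩ := hadm (‖t‖ + 1) (by positivity) c hcd.differentiableOn
      (fun s _ => curveX_inXhat hkm a d hkm.le s)
    exact h0 t (by simp only [Metric.mem_ball, dist_zero_right]; linarith [norm_nonneg t])
  have lapeq : ∀ t : ℂ, lap F t = deriv (deriv g) t.re := by
    intro t
    have h1 : (fun s : ℂ => lineDeriv ℝ F s 1) = fun s => deriv g s.re := by
      funext s
      unfold lineDeriv
      have e : (fun τ : ℝ => F (s + τ • (1 : ℂ))) = fun τ => g (s.re + τ) := by
        funext τ
        rw [hgF]
        congr 1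
        simp
      rw [e, deriv_comp_const_add, add_zero]
    have h2 : (fun s : ℂ => lineDeriv ℝ F s Complex.I) = fun _ => (0 : ℝ) := by
      funext s
      unfold lineDeriv
      have e : (fun τ : ℝ => F (s + τ • Complex.I)) = fun _ => g s.re := by
        funext τ
        rw [hgF]
        congr 1
        simp
      rw [e, deriv_const]
    unfold lap
    rw [h1, h2]
    have h3 : (fun τ : ℝ => (fun s : ℂ => deriv g s.re) (t + τ • (1 : ℂ)))
        = fun τ => deriv g (t.re + τ) := by
      funext τ
      simp
    unfold lineDeriv
    rw [h3, deriv_comp_const_add, add_zero, deriv_const, add_zero]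
  have h2nd : ∀ s : ℝ, 0 ≤ deriv (deriv g) s := by
    intro s
    have := hlap (s : ℂ)
    rwa [lapeq, Complex.ofReal_re] at this
  have hgconv : ConvexOn ℝ Set.univ g := by
    apply convexOn_of_deriv2_nonneg convex_univ hgd.continuous.continuousOn
      (hgd.differentiableOn) (hgd2.differentiableOn)
    intro x _
    exact h2nd x
  have : (fun s : ℝ => Fr φ hkm (a + s • d)) = g := by
    funext s
    rw [hg]
    show Fr φ hkm (a + s • d) = FX m k φ c (s : ℂ)
    unfold FX
    rw [hc, curveX_real hkm a d s, nsq_EX1, nsq_EX2, Fr]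
  rw [this]
  exact hgconv

lemma Phi_convex {φ : ((Fin (m + 1) → ℂ) × (Fin (k + 1) → ℂ)) → ℝ}
    (hG : GInvX m k hkm.le φ) (hadm : AdmX m k hkm.le φ) :
    ConvexOn ℝ Set.univ (Phi φ hkm) := by
  have hFr : ConvexOn ℝ Set.univ (Fr φ hkm) :=
    convexOn_of_lines (fun a d => Fr_line_convex hkm hG hadm a d)
  have hM : ConvexOn ℝ Set.univ (fun a => max (M1 hkm a) (M2 hkm a)) :=
    (convexOn_M1 hkm).sup (convexOn_M2 hkm)
  have := hFr.add hM
  have he : (fun a => Fr φ hkm a + max (M1 hkm a) (M2 hkm a)) = Phi φ hkm := by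
    funext a
    rw [Phi_eq hkm]
  rwa [← he]

end Aux
namespace Aux

variable {m k : ℕ} (hkm : k < m)

/-- block permutation of `Fin (m+1)` -/
def J (σ₁ : Equiv.Perm (Fin (k + 1))) (σ₂ : Equiv.Perm (Fin (m - k))) :
    Equiv.Perm (Fin (m + 1)) :=
  (eBlk hkm).permCongr (σ₁.sumCongr σ₂)

lemma s2_inj : Function.Injective (s2 hkm) := by
  intro i j h
  have := congrArg Fin.val h
  simp only [s2_val] at this
  exact Fin.ext (by omega)

lemma J_s1 (σ₁ : Equiv.Perm (Fin (k + 1))) (σ₂ : Equiv.Perm (Fin (m - k)))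
    (i : Fin (k + 1)) : J hkm σ₁ σ₂ (s1 hkm i) = s1 hkm (σ₁ i) := by
  rw [J, ← eBlk_inl hkm, ← eBlk_inl hkm]
  simp

lemma J_s2 (σ₁ : Equiv.Perm (Fin (k + 1))) (σ₂ : Equiv.Perm (Fin (m - k)))
    (j : Fin (m - k)) : J hkm σ₁ σ₂ (s2 hkm j) = s2 hkm (σ₂ j) := by
  rw [J, ← eBlk_inr hkm, ← eBlk_inr hkm]
  simp

lemma J_one_swap (x y : Fin (m - k)) :
    J hkm 1 (Equiv.swap x y) = Equiv.swap (s2 hkm x) (s2 hkm y) := by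
  apply Equiv.ext
  intro u
  have hu : u = eBlk hkm ((eBlk hkm).symm u) := (Equiv.apply_symm_apply _ u).symm
  rw [hu]
  rcases h : (eBlk hkm).symm u with w | w
  · rw [eBlk_inl hkm, J_s1]
    rw [Equiv.swap_apply_of_ne_of_ne]
    · simp
    · intro hcon
      have := congrArg Fin.val hcon
      simp only [s1_val, s2_val] at this
      have := w.isLt
      omega
    · intro hcon
      have := congrArg Fin.val hcon
      simp only [s1_val, s2_val] at this
      have := w.isLt
      omega
  · rw [eBlk_inr hkm, J_s2]
    rw [(s2_inj hkm).swap_apply]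

lemma J_swap_one (x y : Fin (k + 1)) :
    J hkm (Equiv.swap x y) 1 = Equiv.swap (s1 hkm x) (s1 hkm y) := by
  apply Equiv.ext
  intro u
  have hu : u = eBlk hkm ((eBlk hkm).symm u) := (Equiv.apply_symm_apply _ u).symm
  rw [hu]
  rcases h : (eBlk hkm).symm u with w | w
  · rw [eBlk_inl hkm, J_s1]
    rw [(s1_inj hkm).swap_apply]
  · rw [eBlk_inr hkm, J_s2]
    rw [Equiv.swap_apply_of_ne_of_ne]
    · simp
    · intro hcon
      have := congrArg Fin.val hcon
      simp only [s1_val, s2_val] at this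
      have := x.isLt
      omega
    · intro hcon
      have := congrArg Fin.val hcon
      simp only [s1_val, s2_val] at this
      have := y.isLt
      omega

lemma J_mul_left (σ₁ τ₁ : Equiv.Perm (Fin (k + 1))) (u : Fin (m + 1)) :
    J hkm (σ₁ * τ₁) 1 u = J hkm σ₁ 1 (J hkm τ₁ 1 u) := by
  have hu : u = eBlk hkm ((eBlk hkm).symm u) := (Equiv.apply_symm_apply _ u).symm
  rw [hu]
  rcases h : (eBlk hkm).symm u with w | w
  · rw [eBlk_inl hkm, J_s1, J_s1, J_s1, Equiv.Perm.mul_apply]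
  · rw [eBlk_inr hkm, J_s2, J_s2, J_s2]
    simp

lemma J_mul_right (σ₂ τ₂ : Equiv.Perm (Fin (m - k))) (u : Fin (m + 1)) :
    J hkm 1 (σ₂ * τ₂) u = J hkm 1 σ₂ (J hkm 1 τ₂ u) := by
  have hu : u = eBlk hkm ((eBlk hkm).symm u) := (Equiv.apply_symm_apply _ u).symm
  rw [hu]
  rcases h : (eBlk hkm).symm u with w | w
  · rw [eBlk_inl hkm, J_s1, J_s1, J_s1]
    simp
  · rw [eBlk_inr hkm, J_s2, J_s2, J_s2, Equiv.Perm.mul_apply]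

lemma J_split (σ₁ : Equiv.Perm (Fin (k + 1))) (σ₂ : Equiv.Perm (Fin (m - k)))
    (u : Fin (m + 1)) : J hkm σ₁ σ₂ u = J hkm σ₁ 1 (J hkm 1 σ₂ u) := by
  have hu : u = eBlk hkm ((eBlk hkm).symm u) := (Equiv.apply_symm_apply _ u).symm
  rw [hu]
  rcases h : (eBlk hkm).symm u with w | w
  · rw [eBlk_inl hkm, J_s1, J_s1, J_s1]
    rfl
  · rw [eBlk_inr hkm, J_s2, J_s2, J_s2]
    rfl

variable {φ : ((Fin (m + 1) → ℂ) × (Fin (k + 1) → ℂ)) → ℝ}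

lemma phi2_inv (hG : GInvX m k hkm.le φ) (σ₂ : Equiv.Perm (Fin (m - k)))
    (p : (Fin (m + 1) → ℂ) × (Fin (k + 1) → ℂ)) :
    φ (p.1 ∘ ⇑(J hkm 1 σ₂), p.2) = φ p := by
  revert p
  refine Equiv.Perm.swap_induction_on σ₂ ?_ ?_
  · intro p
    have : p.1 ∘ ⇑(J hkm 1 1) = p.1 := by
      funext u
      have hu : u = eBlk hkm ((eBlk hkm).symm u) := (Equiv.apply_symm_apply _ u).symm
      simp only [Function.comp_apply]
      rw [hu]
      rcases h : (eBlk hkm).symm u with w | w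
      · rw [eBlk_inl hkm, J_s1]; rfl
      · rw [eBlk_inr hkm, J_s2]; rfl
    rw [this]
  · intro σ x y hxy ih p
    have hcomp : p.1 ∘ ⇑(J hkm 1 (Equiv.swap x y * σ))
        = ((p.1 ∘ ⇑(J hkm 1 (Equiv.swap x y))) ∘ ⇑(J hkm 1 σ)) := by
      funext u
      simp only [Function.comp_apply]
      rw [J_mul_right]
    rw [hcomp]
    have step := ih (p := (p.1 ∘ ⇑(J hkm 1 (Equiv.swap x y)), p.2))
    rw [step]
    rw [J_one_swap]
    exact hG.2.1 (s2 hkm x) (s2 hkm y) (by simp) (by simp) p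

lemma phi1_inv (hG : GInvX m k hkm.le φ) (σ₁ : Equiv.Perm (Fin (k + 1)))
    (p : (Fin (m + 1) → ℂ) × (Fin (k + 1) → ℂ)) :
    φ (p.1 ∘ ⇑(J hkm σ₁ 1), p.2 ∘ ⇑σ₁) = φ p := by
  revert p
  refine Equiv.Perm.swap_induction_on σ₁ ?_ ?_
  · intro p
    have h1 : p.1 ∘ ⇑(J hkm 1 1) = p.1 := by
      funext u
      have hu : u = eBlk hkm ((eBlk hkm).symm u) := (Equiv.apply_symm_apply _ u).symm
      simp only [Function.comp_apply]
      rw [hu]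
      rcases h : (eBlk hkm).symm u with w | w
      · rw [eBlk_inl hkm, J_s1]; rfl
      · rw [eBlk_inr hkm, J_s2]; rfl
    rw [h1]
    rfl
  · intro σ x y hxy ih p
    have hcomp : p.1 ∘ ⇑(J hkm (Equiv.swap x y * σ) 1)
        = ((p.1 ∘ ⇑(J hkm (Equiv.swap x y) 1)) ∘ ⇑(J hkm σ 1)) := by
      funext u
      simp only [Function.comp_apply]
      rw [J_mul_left]
    have hcomp2 : p.2 ∘ ⇑(Equiv.swap x y * σ) = (p.2 ∘ ⇑(Equiv.swap x y)) ∘ ⇑σ := by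
      funext u
      simp [Equiv.Perm.mul_apply]
    rw [hcomp, hcomp2]
    have step := ih (p := (p.1 ∘ ⇑(J hkm (Equiv.swap x y) 1), p.2 ∘ ⇑(Equiv.swap x y)))
    rw [step]
    rw [J_swap_one]
    exact hG.1 x y p

lemma phi_J_inv (hG : GInvX m k hkm.le φ) (σ₁ : Equiv.Perm (Fin (k + 1)))
    (σ₂ : Equiv.Perm (Fin (m - k))) (p : (Fin (m + 1) → ℂ) × (Fin (k + 1) → ℂ)) :
    φ (p.1 ∘ ⇑(J hkm σ₁ σ₂), p.2 ∘ ⇑σ₁) = φ p := by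
  have hcomp : p.1 ∘ ⇑(J hkm σ₁ σ₂) = (p.1 ∘ ⇑(J hkm σ₁ 1)) ∘ ⇑(J hkm 1 σ₂) := by
    funext u
    simp only [Function.comp_apply]
    rw [J_split]
  rw [hcomp]
  have step := phi2_inv hkm hG σ₂ (p := (p.1 ∘ ⇑(J hkm σ₁ 1), p.2 ∘ ⇑σ₁))
  exact step.trans (phi1_inv hkm hG σ₁ p)

lemma EX_comp_J (a : Fin (m + 1) → ℝ) (σ₁ : Equiv.Perm (Fin (k + 1)))
    (σ₂ : Equiv.Perm (Fin (m - k))) :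
    EX hkm (a ∘ ⇑(J hkm σ₁ σ₂))
      = ((EX hkm a).1 ∘ ⇑(J hkm σ₁ σ₂), (EX hkm a).2 ∘ ⇑σ₁) := by
  refine Prod.ext (funext fun i => ?_) (funext fun j => ?_)
  · rfl
  · show Complex.exp _ = Complex.exp _
    congr 2
    exact congrArg a (J_s1 hkm σ₁ σ₂ j)

lemma Phi_perm (hG : GInvX m k hkm.le φ) (a : Fin (m + 1) → ℝ)
    (σ₁ : Equiv.Perm (Fin (k + 1))) (σ₂ : Equiv.Perm (Fin (m - k))) :
    Phi φ hkm (a ∘ ⇑(J hkm σ₁ σ₂)) = Phi φ hkm a := by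
  have hT1 : T1 hkm (a ∘ ⇑(J hkm σ₁ σ₂)) = T1 hkm a := by
    unfold T1
    have : ∀ i, (a ∘ ⇑(J hkm σ₁ σ₂)) (s1 hkm i) = a (s1 hkm (σ₁ i)) := by
      intro i; simp only [Function.comp_apply]; rw [J_s1]
    rw [Finset.sum_congr rfl (fun i _ => this i)]
    exact Equiv.sum_comp σ₁ (fun i => a (s1 hkm i))
  have hT2 : T2 hkm (a ∘ ⇑(J hkm σ₁ σ₂)) = T2 hkm a := by
    unfold T2
    have : ∀ j, (a ∘ ⇑(J hkm σ₁ σ₂)) (s2 hkm j) = a (s2 hkm (σ₂ j)) := by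
      intro j; simp only [Function.comp_apply]; rw [J_s2]
    rw [Finset.sum_congr rfl (fun j _ => this j)]
    exact Equiv.sum_comp σ₂ (fun j => a (s2 hkm j))
  have hN1 : N1 (a ∘ ⇑(J hkm σ₁ σ₂)) = N1 a := by
    unfold N1
    exact Equiv.sum_comp (J hkm σ₁ σ₂) (fun i => Real.exp (a i) ^ 2)
  have hN2 : N2 hkm (a ∘ ⇑(J hkm σ₁ σ₂)) = N2 hkm a := by
    unfold N2
    have : ∀ i, (a ∘ ⇑(J hkm σ₁ σ₂)) (s1 hkm i) = a (s1 hkm (σ₁ i)) := by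
      intro i; simp only [Function.comp_apply]; rw [J_s1]
    rw [Finset.sum_congr rfl (fun i _ => by rw [this i])]
    exact Equiv.sum_comp σ₁ (fun i => Real.exp (a (s1 hkm i)) ^ 2)
  have hφ : φ (EX hkm (a ∘ ⇑(J hkm σ₁ σ₂))) = φ (EX hkm a) := by
    rw [EX_comp_J]
    exact phi_J_inv hkm hG σ₁ σ₂ (EX hkm a)
  rw [Phi_eq hkm, Phi_eq hkm, Fr, Fr, M1, M1, M2, M2, hT1, hT2, hN1, hN2, hφ]

end Aux
namespace Aux

variable {m k : ℕ} (hkm : k < m)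

lemma T1_shift (v : Fin (m + 1) → ℝ) (c : ℝ) :
    T1 hkm (fun i => v i + c) = T1 hkm v + ((k : ℝ) + 1) * c := by
  unfold T1
  rw [Finset.sum_add_distrib, Finset.sum_const, Finset.card_univ, Fintype.card_fin,
    nsmul_eq_mul]
  push_cast
  ring

lemma T2_shift (v : Fin (m + 1) → ℝ) (c : ℝ) :
    T2 hkm (fun i => v i + c) = T2 hkm v + ((m : ℝ) - (k : ℝ)) * c := by
  unfold T2
  rw [Finset.sum_add_distrib, Finset.sum_const, Finset.card_univ, Fintype.card_fin,
    nsmul_eq_mul, Nat.cast_sub hkm.le]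

lemma N1_shift (v : Fin (m + 1) → ℝ) (c : ℝ) :
    N1 (fun i => v i + c) = Real.exp c ^ 2 * N1 v := by
  unfold N1
  rw [Finset.mul_sum]
  congr 1
  funext i
  rw [Real.exp_add]
  ring

lemma N2_shift (v : Fin (m + 1) → ℝ) (c : ℝ) :
    N2 hkm (fun i => v i + c) = Real.exp c ^ 2 * N2 hkm v := by
  unfold N2
  rw [Finset.mul_sum]
  congr 1
  funext i
  rw [Real.exp_add]
  ring

lemma phiEX_shift {φ : ((Fin (m + 1) → ℂ) × (Fin (k + 1) → ℂ)) → ℝ}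
    (hscal : BiScalInv m k φ) (v : Fin (m + 1) → ℝ) (c : ℝ) :
    φ (EX hkm (fun i => v i + c)) = φ (EX hkm v) := by
  have hcomp1 : (EX hkm (fun i => v i + c)).1 = Complex.exp (c : ℂ) • (EX hkm v).1 := by
    funext i
    rw [Pi.smul_apply, smul_eq_mul, EX_fst, EX_fst, ← Complex.exp_add]
    congr 1
    push_cast
    ring
  have hcomp2 : (EX hkm (fun i => v i + c)).2 = Complex.exp (c : ℂ) • (EX hkm v).2 := by
    funext j
    rw [Pi.smul_apply, smul_eq_mul, EX_snd, EX_snd, ← Complex.exp_add]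
    congr 1
    push_cast
    ring
  have he : EX hkm (fun i => v i + c)
      = (Complex.exp (c : ℂ) • (EX hkm v).1, Complex.exp (c : ℂ) • (EX hkm v).2) :=
    Prod.ext hcomp1 hcomp2
  rw [he]
  exact hscal _ _ (Complex.exp_ne_zero _) (Complex.exp_ne_zero _) (EX hkm v)

lemma Phi_shift {φ : ((Fin (m + 1) → ℂ) × (Fin (k + 1) → ℂ)) → ℝ}
    (hscal : BiScalInv m k φ) (v : Fin (m + 1) → ℝ) (c : ℝ) :
    Phi φ hkm (fun i => v i + c) = Phi φ hkm v := by
  have hk1 : ((k : ℝ) + 1) ≠ 0 := by positivity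
  have hkm' : (k : ℝ) < (m : ℝ) := by exact_mod_cast hkm
  have hmk : ((m : ℝ) - (k : ℝ)) ≠ 0 := by linarith
  rw [Phi_eq hkm, Phi_eq hkm, Fr, Fr, M1, M1, M2, M2, T1_shift hkm, T2_shift hkm,
    N1_shift, N2_shift hkm, phiEX_shift hkm hscal,
    Real.log_mul (by positivity) (N1_pos v).ne',
    Real.log_mul (by positivity) (N2_pos hkm v).ne',
    Real.log_pow, Real.log_exp]
  have h1 : -((2 * ((m : ℝ) + 1 - (k : ℝ)) / ((k : ℝ) + 1) + 2 * (k : ℝ) / ((k : ℝ) + 1))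
        * (T1 hkm v + ((k : ℝ) + 1) * c))
      = -((2 * ((m : ℝ) + 1 - (k : ℝ)) / ((k : ℝ) + 1) + 2 * (k : ℝ) / ((k : ℝ) + 1))
        * T1 hkm v) - 2 * ((m : ℝ) + 1) * c := by
    field_simp
    ring
  have h2 : -(2 * ((m : ℝ) + 1 - (k : ℝ)) / ((m : ℝ) - (k : ℝ))
          * (T2 hkm v + ((m : ℝ) - (k : ℝ)) * c)
        + 2 * (k : ℝ) / ((k : ℝ) + 1) * (T1 hkm v + ((k : ℝ) + 1) * c))
      = -(2 * ((m : ℝ) + 1 - (k : ℝ)) / ((m : ℝ) - (k : ℝ)) * T2 hkm v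
        + 2 * (k : ℝ) / ((k : ℝ) + 1) * T1 hkm v) - 2 * ((m : ℝ) + 1) * c := by
    field_simp
    ring
  rw [h1, h2, max_sub_sub_right]
  ring

/-- blockwise average -/
def abar (hkm : k < m) (a : Fin (m + 1) → ℝ) : Fin (m + 1) → ℝ := fun i =>
  if (i : ℕ) ≤ k then T1 hkm a / ((k : ℝ) + 1) else T2 hkm a / ((m : ℝ) - (k : ℝ))

lemma Phi_abar_le {φ : ((Fin (m + 1) → ℂ) × (Fin (k + 1) → ℂ)) → ℝ}
    (hG : GInvX m k hkm.le φ) (hadm : AdmX m k hkm.le φ) (a : Fin (m + 1) → ℝ) :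
    Phi φ hkm (abar hkm a) ≤ Phi φ hkm a := by
  haveI : NeZero (m - k) := ⟨by omega⟩
  classical
  set ι := (Fin (k + 1) × Fin (m - k)) with hι
  set p : ι → (Fin (m + 1) → ℝ) :=
    fun c => a ∘ ⇑(J hkm (Equiv.addLeft c.1) (Equiv.addLeft c.2)) with hp
  set N : ℝ := (Fintype.card ι : ℝ) with hN
  have hcard : Fintype.card ι = (k + 1) * (m - k) := by simp [hι]
  have hk1 : ((k + 1 : ℕ) : ℝ) ≠ 0 := Nat.cast_ne_zero.mpr (by omega)
  have hmk0 : ((m - k : ℕ) : ℝ) ≠ 0 := Nat.cast_ne_zero.mpr (by omega)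
  have hNval : N = ((k + 1 : ℕ) : ℝ) * ((m - k : ℕ) : ℝ) := by
    rw [hN, hcard]; push_cast; ring
  have hNpos : 0 < N := by
    rw [hNval]
    have h1 : (0:ℝ) < ((k + 1 : ℕ) : ℝ) := by positivity
    have h2 : (0:ℝ) < ((m - k : ℕ) : ℝ) := by
      have : 0 < m - k := by omega
      exact_mod_cast this
    exact mul_pos h1 h2
  have key1 : ∀ w : Fin (k + 1),
      (∑ c : ι, (1 / N) * p c (s1 hkm w)) = T1 hkm a / ((k : ℝ) + 1) := by
    intro w
    have hpc : ∀ c : ι, p c (s1 hkm w) = a (s1 hkm (c.1 + w)) := by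
      intro c
      show a (J hkm (Equiv.addLeft c.1) (Equiv.addLeft c.2) (s1 hkm w)) = _
      rw [J_s1]
      rfl
    rw [Finset.sum_congr rfl (fun c _ => by rw [hpc c])]
    rw [Fintype.sum_prod_type]
    have hinner : ∀ c₁ : Fin (k + 1), (∑ _c₂ : Fin (m - k), (1 / N) * a (s1 hkm (c₁ + w)))
        = ((m - k : ℕ) : ℝ) * ((1 / N) * a (s1 hkm (c₁ + w))) := by
      intro c₁
      rw [Finset.sum_const, Finset.card_univ, Fintype.card_fin, nsmul_eq_mul]
    rw [Finset.sum_congr rfl (fun c₁ _ => hinner c₁), ← Finset.mul_sum, ← Finset.mul_sum]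
    have hre : (∑ c₁ : Fin (k + 1), a (s1 hkm (c₁ + w))) = T1 hkm a := by
      have h := Equiv.sum_comp (Equiv.addRight w) (fun c => a (s1 hkm c))
      rw [T1, ← h]
      apply Finset.sum_congr rfl
      intro c _
      simp [Equiv.coe_addRight]
    rw [hre, hNval, T1]
    field_simp
    push_cast
    ring
  have key2 : ∀ w : Fin (m - k),
      (∑ c : ι, (1 / N) * p c (s2 hkm w)) = T2 hkm a / ((m : ℝ) - (k : ℝ)) := by
    intro w
    have hpc : ∀ c : ι, p c (s2 hkm w) = a (s2 hkm (c.2 + w)) := by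
      intro c
      show a (J hkm (Equiv.addLeft c.1) (Equiv.addLeft c.2) (s2 hkm w)) = _
      rw [J_s2]
      rfl
    rw [Finset.sum_congr rfl (fun c _ => by rw [hpc c])]
    rw [Fintype.sum_prod_type_right]
    have hinner : ∀ c₂ : Fin (m - k), (∑ _c₁ : Fin (k + 1), (1 / N) * a (s2 hkm (c₂ + w)))
        = ((k + 1 : ℕ) : ℝ) * ((1 / N) * a (s2 hkm (c₂ + w))) := by
      intro c₂
      rw [Finset.sum_const, Finset.card_univ, Fintype.card_fin, nsmul_eq_mul]
    rw [Finset.sum_congr rfl (fun c₂ _ => hinner c₂), ← Finset.mul_sum, ← Finset.mul_sum]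
    have hre : (∑ c₂ : Fin (m - k), a (s2 hkm (c₂ + w))) = T2 hkm a := by
      have h := Equiv.sum_comp (Equiv.addRight w) (fun c => a (s2 hkm c))
      rw [T2, ← h]
      apply Finset.sum_congr rfl
      intro c _
      simp [Equiv.coe_addRight]
    rw [hre, hNval, T2]
    rw [show ((m : ℝ) - (k : ℝ)) = ((m - k : ℕ) : ℝ) from by
      rw [Nat.cast_sub hkm.le]]
    field_simp
  have hsum : (∑ c : ι, (1 / N) • p c) = abar hkm a := by
    funext i
    rw [Finset.sum_apply]
    simp only [Pi.smul_apply, smul_eq_mul]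
    rcases hcase : (eBlk hkm).symm i with w | w
    · have hi : i = s1 hkm w := by
        rw [← eBlk_inl hkm, ← hcase, Equiv.apply_symm_apply]
      rw [hi, key1 w]
      unfold abar
      rw [if_pos (show ((s1 hkm w : Fin (m + 1)) : ℕ) ≤ k from Nat.lt_succ_iff.mp w.isLt)]
    · have hi : i = s2 hkm w := by
        rw [← eBlk_inr hkm, ← hcase, Equiv.apply_symm_apply]
      rw [hi, key2 w]
      unfold abar
      rw [if_neg (show ¬ ((s2 hkm w : Fin (m + 1)) : ℕ) ≤ k from by rw [s2_val]; omega)]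
  have hconv := Phi_convex hkm hG hadm
  have jensen := hconv.map_sum_le (t := (Finset.univ : Finset ι)) (w := fun _ => 1 / N)
    (p := p) (fun i _ => by positivity)
    (by rw [Finset.sum_const, Finset.card_univ, nsmul_eq_mul]; field_simp; exact hN.symm)
    (fun i _ => Set.mem_univ _)
  rw [hsum] at jensen
  calc Phi φ hkm (abar hkm a) ≤ ∑ c : ι, (1 / N) • Phi φ hkm (p c) := jensen
    _ = ∑ _c : ι, (1 / N) * Phi φ hkm a := by
        apply Finset.sum_congr rfl
        intro c _
        rw [smul_eq_mul]
        congr 1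
        exact Phi_perm hkm hG a (Equiv.addLeft c.1) (Equiv.addLeft c.2)
    _ = Phi φ hkm a := by
        rw [Finset.sum_const, Finset.card_univ, nsmul_eq_mul]
        field_simp
        rw [hN]

end Aux
theorem stmt12 (m k : ℕ) (hm : 2 ≤ m) (hk : 1 ≤ k) (hkm : k ≤ m - 1)
    (φ : ((Fin (m + 1) → ℂ) × (Fin (k + 1) → ℂ)) → ℝ)
    (hcont : ContinuousOn φ {p | inXhat m k (by omega) p})
    (hscal : BiScalInv m k φ) (hG : GInvX m k (by omega) φ)
    (hadm : AdmX m k (by omega) φ)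
    (x : Fin (m + 1) → ℝ) (hx : ∀ i, 0 < x i) :
    let zA : Fin (m + 1) → ℂ := fun i => if i = 0 then 1 else (x i : ℂ)
    let ζA : Fin (k + 1) → ℂ := fun j => zA (embX m k (by omega) j)
    let νv : ℝ := (∏ i ∈ Finset.univ.filter (fun i : Fin (m + 1) => k + 1 ≤ (i : ℕ)), x i) ^
        (1 / ((m : ℝ) - (k : ℝ))) /
      (∏ i ∈ Finset.univ.filter (fun i : Fin (m + 1) => 1 ≤ (i : ℕ) ∧ (i : ℕ) ≤ k), x i) ^
        (1 / ((k : ℝ) + 1))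
    let zB : Fin (m + 1) → ℂ := fun i => if (i : ℕ) ≤ k then 1 else (νv : ℂ)
    let oneζ : Fin (k + 1) → ℂ := fun _ => 1
    φ (zB, oneζ) - psiX m k (zB, oneζ) ≤ φ (zA, ζA) - psiX m k (zA, ζA) := by
  intro zA ζA νv zB oneζ
  have hkm' : k < m := by omega
  have hzA : zA = fun i => if i = 0 then 1 else (x i : ℂ) := rfl
  have hζA : ζA = fun j => zA (embX m k (by omega) j) := rfl
  have hνv : νv = (∏ i ∈ Finset.univ.filter (fun i : Fin (m + 1) => k + 1 ≤ (i : ℕ)), x i) ^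
        (1 / ((m : ℝ) - (k : ℝ))) /
      (∏ i ∈ Finset.univ.filter (fun i : Fin (m + 1) => 1 ≤ (i : ℕ) ∧ (i : ℕ) ≤ k), x i) ^
        (1 / ((k : ℝ) + 1)) := rfl
  have hzB : zB = fun i : Fin (m + 1) => if (i : ℕ) ≤ k then (1 : ℂ) else (νv : ℂ) := rfl
  have honeζ : oneζ = fun _ => 1 := rfl
  have hP2pos : 0 < ∏ i ∈ Finset.univ.filter (fun i : Fin (m + 1) => k + 1 ≤ (i : ℕ)), x i :=
    Finset.prod_pos (fun i _ => hx i)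
  have hP1pos : 0 < ∏ i ∈ Finset.univ.filter
      (fun i : Fin (m + 1) => 1 ≤ (i : ℕ) ∧ (i : ℕ) ≤ k), x i :=
    Finset.prod_pos (fun i _ => hx i)
  have hν : 0 < νv := by
    rw [hνv]
    exact div_pos (Real.rpow_pos_of_pos hP2pos _) (Real.rpow_pos_of_pos hP1pos _)
  set a : Fin (m + 1) → ℝ := fun i => if i = 0 then 0 else Real.log (x i) with ha
  set b : Fin (m + 1) → ℝ := fun i => if (i : ℕ) ≤ k then 0 else Real.log νv with hb
  -- identify the two points as exponential points
  have hEa1 : (Aux.EX hkm' a).1 = zA := by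
    funext i
    rw [Aux.EX_fst, hzA]
    by_cases hi : i = 0
    · rw [ha]
      simp [hi]
    · rw [ha]
      simp only [hi, if_neg, if_false]
      rw [← Complex.ofReal_exp, Real.exp_log (hx i)]
  have hEa : Aux.EX hkm' a = (zA, ζA) := by
    refine Prod.ext hEa1 (funext fun j => ?_)
    rw [hζA]
    exact congrFun hEa1 (Aux.s1 hkm' j)
  have hEb : Aux.EX hkm' b = (zB, oneζ) := by
    have h1 : (Aux.EX hkm' b).1 = zB := by
      funext i
      rw [Aux.EX_fst, hzB]
      by_cases hi : (i : ℕ) ≤ k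
      · rw [hb]
        simp [hi]
      · rw [hb]
        simp only [hi, if_neg, if_false]
        rw [← Complex.ofReal_exp, Real.exp_log hν]
    refine Prod.ext h1 (funext fun j => ?_)
    rw [honeζ]
    rw [Aux.EX_snd, hb]
    simp [Nat.lt_succ_iff.mp j.isLt]
  -- compute T1 and T2 of a
  have hT1 : Aux.T1 hkm' a = Real.log (∏ i ∈ Finset.univ.filter
      (fun i : Fin (m + 1) => 1 ≤ (i : ℕ) ∧ (i : ℕ) ≤ k), x i) := by
    rw [Real.log_prod (fun i _ => (hx i).ne'), Aux.T1, ← Aux.sum_blk1 hkm' a,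
      Finset.sum_filter, Finset.sum_filter]
    apply Finset.sum_congr rfl
    intro i _
    by_cases h0 : (i : ℕ) = 0
    · have hi0 : i = 0 := by
        apply Fin.ext
        simpa using h0
      rw [ha]
      simp [hi0]
    · have hi0 : i ≠ 0 := by
        intro hcon
        apply h0
        rw [hcon]
        rfl
      by_cases hik : (i : ℕ) ≤ k
      · rw [if_pos hik, if_pos ⟨by omega, hik⟩, ha]
        simp [hi0]
      · rw [if_neg hik, if_neg (by omega)]
  have hT2 : Aux.T2 hkm' a = Real.log (∏ i ∈ Finset.univ.filter
      (fun i : Fin (m + 1) => k + 1 ≤ (i : ℕ)), x i) := by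
    rw [Real.log_prod (fun i _ => (hx i).ne'), Aux.T2,
      Aux.sum_blk2 hkm' (fun i => Real.log (x i))]
    apply Finset.sum_congr rfl
    intro j _
    have h0 : Aux.s2 hkm' j ≠ 0 := by
      intro hcon
      have h2 := congrArg Fin.val hcon
      rw [Aux.s2_val] at h2
      simp only [Fin.val_zero] at h2
      omega
    rw [ha]
    simp [h0]
  have hlogν : Real.log νv = Aux.T2 hkm' a / ((m : ℝ) - (k : ℝ))
      - Aux.T1 hkm' a / ((k : ℝ) + 1) := by
    rw [hνv, Real.log_div (Real.rpow_pos_of_pos hP2pos _).ne' (Real.rpow_pos_of_pos hP1pos _).ne',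
      Real.log_rpow hP2pos, Real.log_rpow hP1pos, ← hT1, ← hT2]
    ring
  -- the shifted b is the blockwise average of a
  have habar : (fun i => b i + Aux.T1 hkm' a / ((k : ℝ) + 1)) = Aux.abar hkm' a := by
    funext i
    unfold Aux.abar
    by_cases hik : (i : ℕ) ≤ k
    · rw [if_pos hik, hb]
      simp [hik]
    · rw [if_neg hik, hb]
      simp only [hik, if_neg, if_false]
      rw [hlogν]
      ring
  -- main chain
  have main : Aux.Phi φ hkm' b ≤ Aux.Phi φ hkm' a := by
    calc Aux.Phi φ hkm' b
        = Aux.Phi φ hkm' (fun i => b i + Aux.T1 hkm' a / ((k : ℝ) + 1)) :=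
          (Aux.Phi_shift hkm' hscal b _).symm
      _ = Aux.Phi φ hkm' (Aux.abar hkm' a) := by rw [habar]
      _ ≤ Aux.Phi φ hkm' a := Aux.Phi_abar_le hkm' hG hadm a
  unfold Aux.Phi at main
  rw [hEa, hEb] at main
  exact main
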